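/- arXiv:1206.3151 — 3 statements merged into one kernel-verified Lean document; each statement's English description precedes it below -/
import Mathlib

section
/- The mass of the mKdV breather is M[B_{α,β}] = (1/2)∫_ℝ B_{α,β}(t,x)² dx = 4β, for all α, β > 0 and all t ∈ ℝ. -/
/-!
Write `D = α² cosh²(β(x+b)) + β² sin²(α(x+a))` with `a = δt`, `b = γt`. Differentiating the
arctangent gives `B = 2√2 r` with `r = αβ(α cos·cosh − β sin·sinh)/D`, and the hyperbolic and
trigonometric Pythagorean identities turn `r²` into the exact derivative `(log D)''/4`. As
`x → ±∞` the `cosh²` term dominates `D`, so `(log D)'/4 → ±β/2`; hence `∫ r² = β` and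
`M[B] = ½ · 8 · β = 4β`.
-/

open MeasureTheory

noncomputable def breather (α β x₁ x₂ : ℝ) (t x : ℝ) : ℝ :=
  2 * Real.sqrt 2 *
    deriv (fun y : ℝ =>
      Real.arctan ((β / α) * Real.sin (α * (y + (α ^ 2 - 3 * β ^ 2) * t + x₁)) /
        Real.cosh (β * (y + (3 * α ^ 2 - β ^ 2) * t + x₂)))) x

open Real Filter Topology

namespace Real

theorem tendsto_cosh_atTop : Tendsto cosh atTop atTop :=
  tendsto_atTop_mono (fun x => by rw [cosh_eq]; linarith [exp_pos (-x)])
    (tendsto_exp_atTop.atTop_div_const two_pos)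

theorem tendsto_cosh_atBot : Tendsto cosh atBot atTop := by
  simpa [Function.comp_def] using tendsto_cosh_atTop.comp tendsto_neg_atBot_atTop

theorem tanh_eq_one_sub_two_div (x : ℝ) : tanh x = 1 - 2 / (exp (2 * x) + 1) := by
  have h2 : exp (2 * x) = exp x * exp x := by rw [← exp_add]; ring_nf
  rw [tanh_eq, h2, exp_neg]
  field_simp
  ring

theorem tendsto_tanh_atTop : Tendsto tanh atTop (𝓝 1) := by
  have hden : Tendsto (fun x => exp (2 * x) + 1) atTop atTop :=
    tendsto_atTop_add_const_right _ 1
      (tendsto_exp_atTop.comp (tendsto_id.const_mul_atTop two_pos))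
  simpa [← tanh_eq_one_sub_two_div] using (hden.const_div_atTop 2).const_sub 1

theorem tendsto_tanh_atBot : Tendsto tanh atBot (𝓝 (-1)) := by
  simpa [Function.comp_def] using (tendsto_tanh_atTop.comp tendsto_neg_atBot_atTop).neg

end Real

theorem tendsto_div_of_abs_le_of_tendsto_atTop {ι : Type*} {l : Filter ι} {f g : ι → ℝ} {C : ℝ}
    (hf : ∀ i, |f i| ≤ C) (hg : Tendsto g l atTop) : Tendsto (fun i => f i / g i) l (𝓝 0) := by
  simp only [div_eq_mul_inv]
  exact isBoundedUnder_le_mul_tendsto_zero ⟨C, eventually_map.2 (Eventually.of_forall hf)⟩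
    hg.inv_tendsto_atTop

theorem integrable_of_hasDerivAt_of_nonneg_of_tendsto {g g' : ℝ → ℝ} {m n : ℝ}
    (hderiv : ∀ x, HasDerivAt g (g' x) x) (hpos : ∀ x, 0 ≤ g' x)
    (hbot : Tendsto g atBot (𝓝 m)) (htop : Tendsto g atTop (𝓝 n)) : Integrable g' := by
  have hcont : Continuous g := continuous_iff_continuousAt.2 fun x => (hderiv x).continuousAt
  have hint (a b : ℝ) : IntervalIntegrable g' volume a b :=
    intervalIntegral.intervalIntegrable_deriv_of_nonneg hcont.continuousOn (fun x _ => hderiv x)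
      fun x _ => hpos x
  refine integrable_of_intervalIntegral_norm_tendsto (n - m) (fun i => (hint (-i) i).1)
    tendsto_neg_atTop_atBot tendsto_id ?_
  have hftc (i : ℝ) : ∫ x in -i..i, ‖g' x‖ = g i - g (-i) := by
    simp only [Real.norm_of_nonneg (hpos _)]
    exact intervalIntegral.integral_eq_sub_of_hasDerivAt (fun x _ => hderiv x) (hint _ _)
  simpa only [hftc, Function.comp_def] using htop.sub (hbot.comp tendsto_neg_atTop_atBot)

theorem hasDerivAt_mul_add (c d x : ℝ) : HasDerivAt (fun y => c * (y + d)) c x := by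
  simpa using ((hasDerivAt_id x).add_const d).const_mul c

section Breather

variable (α β a b : ℝ)

noncomputable def breatherDenom (x : ℝ) : ℝ :=
  α ^ 2 * cosh (β * (x + b)) ^ 2 + β ^ 2 * sin (α * (x + a)) ^ 2

noncomputable def breatherProfile (x : ℝ) : ℝ :=
  α * β * (α * cos (α * (x + a)) * cosh (β * (x + b))
    - β * sin (α * (x + a)) * sinh (β * (x + b))) / breatherDenom α β a b x

-- `(log D)' / 4` for `D = breatherDenom α β a b`.
noncomputable def breatherMassPrimitive (x : ℝ) : ℝ :=
  (α ^ 2 * β * cosh (β * (x + b)) * sinh (β * (x + b))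
    + α * β ^ 2 * sin (α * (x + a)) * cos (α * (x + a))) / (2 * breatherDenom α β a b x)

variable {α}

theorem breatherDenom_pos (hα : α ≠ 0) (x : ℝ) : 0 < breatherDenom α β a b x := by
  unfold breatherDenom
  positivity

theorem hasDerivAt_arctan_breather (hα : α ≠ 0) (x : ℝ) :
    HasDerivAt (fun y => arctan (β / α * sin (α * (y + a)) / cosh (β * (y + b))))
      (breatherProfile α β a b x) x := by
  have hq := (((hasDerivAt_mul_add α a x).sin.const_mul (β / α)).div
    (hasDerivAt_mul_add β b x).cosh (cosh_pos _).ne').arctan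
  refine hq.congr_deriv ?_
  have := breatherDenom_pos β a b hα x
  unfold breatherProfile breatherDenom at *
  simp only [Pi.div_apply]
  field_simp

theorem hasDerivAt_breatherMassPrimitive (hα : α ≠ 0) (x : ℝ) :
    HasDerivAt (breatherMassPrimitive α β a b) (breatherProfile α β a b x ^ 2) x := by
  have hD := breatherDenom_pos β a b hα x
  have hsin := hasDerivAt_mul_add α a x
  have hcosh := hasDerivAt_mul_add β b x
  have hN := ((hcosh.cosh.const_mul (α ^ 2 * β)).mul hcosh.sinh).add
    ((hsin.sin.const_mul (α * β ^ 2)).mul hsin.cos)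
  have hDen := (((hcosh.cosh.pow 2).const_mul (α ^ 2)).add
    ((hsin.sin.pow 2).const_mul (β ^ 2))).const_mul 2
  refine (hN.div hDen (by positivity)).congr_deriv ?_
  unfold breatherProfile breatherDenom at *
  simp only [Pi.add_apply, Pi.mul_apply, Pi.pow_apply, Nat.cast_ofNat, Nat.add_one_sub_one, pow_one]
  rw [eq_comm, div_pow, div_eq_div_iff (by positivity) (by positivity)]
  linear_combination
    (-2 * α ^ 2 * β ^ 2 * (α ^ 2 * cosh (β * (x + b)) ^ 2 + β ^ 2 * sin (α * (x + a)) ^ 2) ^ 3) *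
      (cosh_sq_sub_sinh_sq (β * (x + b)) - sin_sq_add_cos_sq (α * (x + a)))

theorem tendsto_breatherMassPrimitive {l : Filter ℝ} {σ : ℝ} (hα : α ≠ 0)
    (htanh : Tendsto (fun x => tanh (β * (x + b))) l (𝓝 σ))
    (hcosh : Tendsto (fun x => cosh (β * (x + b))) l atTop) :
    Tendsto (breatherMassPrimitive α β a b) l (𝓝 (σ * β / 2)) := by
  have hcosh_sq := (tendsto_pow_atTop two_ne_zero).comp hcosh
  have hsc := tendsto_div_of_abs_le_of_tendsto_atTop
    (f := fun x => sin (α * (x + a)) * cos (α * (x + a)))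
    (fun x => by
      rw [abs_mul]; exact mul_le_one₀ (abs_sin_le_one _) (abs_nonneg _) (abs_cos_le_one _))
    hcosh_sq
  have hss := tendsto_div_of_abs_le_of_tendsto_atTop (f := fun x => sin (α * (x + a)) ^ 2)
    (fun x => by rw [abs_pow]; exact pow_le_one₀ (abs_nonneg _) (abs_sin_le_one _)) hcosh_sq
  have hlim := ((htanh.const_mul (α ^ 2 * β)).add (hsc.const_mul (α * β ^ 2))).div
    (((hss.const_mul (β ^ 2)).const_add (α ^ 2)).const_mul 2) (by simp [hα])
  have hval : (α ^ 2 * β * σ + α * β ^ 2 * 0) / (2 * (α ^ 2 + β ^ 2 * 0)) = σ * β / 2 := by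
    field_simp
    ring
  rw [← hval]
  refine hlim.congr fun x => ?_
  have := breatherDenom_pos β a b hα x
  unfold breatherMassPrimitive breatherDenom at *
  simp only [Pi.div_apply, Function.comp_apply, tanh_eq_sinh_div_cosh]
  field_simp

theorem integral_breatherProfile_sq (hα : α ≠ 0) (hβ : 0 < β) :
    ∫ x, breatherProfile α β a b x ^ 2 = β := by
  have hu_top : Tendsto (fun x => β * (x + b)) atTop atTop :=
    (tendsto_atTop_add_const_right _ b tendsto_id).const_mul_atTop hβ
  have hu_bot : Tendsto (fun x => β * (x + b)) atBot atBot :=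
    (tendsto_atBot_add_const_right _ b tendsto_id).const_mul_atBot hβ
  have htop := tendsto_breatherMassPrimitive β a b hα (tendsto_tanh_atTop.comp hu_top)
    (tendsto_cosh_atTop.comp hu_top)
  have hbot := tendsto_breatherMassPrimitive β a b hα (tendsto_tanh_atBot.comp hu_bot)
    (tendsto_cosh_atBot.comp hu_bot)
  have hderiv := hasDerivAt_breatherMassPrimitive β a b hα
  rw [integral_of_hasDerivAt_of_tendsto hderiv
    (integrable_of_hasDerivAt_of_nonneg_of_tendsto hderiv (fun x => sq_nonneg _) hbot htop)
    hbot htop]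
  ring

theorem breather_eq (hα : α ≠ 0) (x₁ x₂ t x : ℝ) :
    breather α β x₁ x₂ t x = 2 * √2 *
      breatherProfile α β ((α ^ 2 - 3 * β ^ 2) * t + x₁) ((3 * α ^ 2 - β ^ 2) * t + x₂) x := by
  simp only [breather, add_assoc]
  rw [(hasDerivAt_arctan_breather β _ _ hα x).deriv]

end Breather

theorem breather_mass (α β : ℝ) (hα : 0 < α) (hβ : 0 < β) (t : ℝ) :
    (1 / 2 : ℝ) * ∫ x : ℝ, (breather α β 0 0 t x) ^ 2 = 4 * β := by
  simp only [breather_eq β hα.ne', mul_pow, sq_sqrt zero_le_two]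
  rw [integral_const_mul, integral_breatherProfile_sq β _ _ hα.ne' hβ]
  ring
end

section
/- For every fixed t ∈ ℝ, the breather profile B = B_{α,β}(t,·) satisfies the fourth-order nonlinear elliptic equation B_{xxxx} − 2(β²−α²)(B_{xx} + B³) + (α²+β²)² B + 5 B B_x² + 5 B² B_{xx} + (3/2) B⁵ = 0 on ℝ. -/
set_option maxHeartbeats 1000000
set_option maxRecDepth 16000
set_option linter.unusedVariables false

private noncomputable def brM0 (a b w : ℝ) (s c S C : ℝ → ℝ) : ℝ → ℝ := fun z => (-2) * w * a * b ^ 2 * (s z * S z) + 2 * w * a ^ 2 * b * (c z * C z)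

private noncomputable def brR0 (a b w : ℝ) (s c S C : ℝ → ℝ) : ℝ → ℝ := fun z => b ^ 2 * (s z ^ 2) + a ^ 2 * (C z ^ 2)

private noncomputable def brM1 (a b w : ℝ) (s c S C : ℝ → ℝ) : ℝ → ℝ := fun z => (-2) * w * a * b ^ 3 * (s z * C z) + (-2) * w * a ^ 3 * b * (s z * C z)

private noncomputable def brR1 (a b w : ℝ) (s c S C : ℝ → ℝ) : ℝ → ℝ := fun z => 2 * a * b ^ 2 * (s z * c z) + 2 * a ^ 2 * b * (S z * C z)

private noncomputable def brM2 (a b w : ℝ) (s c S C : ℝ → ℝ) : ℝ → ℝ := fun z => (-2) * w * a * b ^ 4 * (s z * S z) + (-2) * w * a ^ 2 * b ^ 3 * (c z * C z) + (-2) * w * a ^ 3 * b ^ 2 * (s z * S z) + (-2) * w * a ^ 4 * b * (c z * C z)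

private noncomputable def brR2 (a b w : ℝ) (s c S C : ℝ → ℝ) : ℝ → ℝ := fun z => 2 * a ^ 2 * b ^ 2 * (C z ^ 2) + 2 * a ^ 2 * b ^ 2 * (S z ^ 2) + 2 * a ^ 2 * b ^ 2 * (c z ^ 2) + (-2) * a ^ 2 * b ^ 2 * (s z ^ 2)

private noncomputable def brM3 (a b w : ℝ) (s c S C : ℝ → ℝ) : ℝ → ℝ := fun z => (-2) * w * a * b ^ 5 * (s z * C z) + (-4) * w * a ^ 2 * b ^ 4 * (c z * S z) + (-4) * w * a ^ 4 * b ^ 2 * (c z * S z) + 2 * w * a ^ 5 * b * (s z * C z)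

private noncomputable def brR3 (a b w : ℝ) (s c S C : ℝ → ℝ) : ℝ → ℝ := fun z => 8 * a ^ 2 * b ^ 3 * (S z * C z) + (-8) * a ^ 3 * b ^ 2 * (s z * c z)

private noncomputable def brM4 (a b w : ℝ) (s c S C : ℝ → ℝ) : ℝ → ℝ := fun z => (-2) * w * a * b ^ 6 * (s z * S z) + (-6) * w * a ^ 2 * b ^ 5 * (c z * C z) + 4 * w * a ^ 3 * b ^ 4 * (s z * S z) + (-4) * w * a ^ 4 * b ^ 3 * (c z * C z) + 6 * w * a ^ 5 * b ^ 2 * (s z * S z) + 2 * w * a ^ 6 * b * (c z * C z)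

private noncomputable def brR4 (a b w : ℝ) (s c S C : ℝ → ℝ) : ℝ → ℝ := fun z => 8 * a ^ 2 * b ^ 4 * (C z ^ 2) + 8 * a ^ 2 * b ^ 4 * (S z ^ 2) + (-8) * a ^ 4 * b ^ 2 * (c z ^ 2) + 8 * a ^ 4 * b ^ 2 * (s z ^ 2)

private noncomputable def brG1_0 (a b w : ℝ) (s c S C : ℝ → ℝ) : ℝ → ℝ := fun z => (-1) * (brM0 a b w s c S C z * brR1 a b w s c S C z) + brM1 a b w s c S C z * brR0 a b w s c S C z

private noncomputable def brG1_1 (a b w : ℝ) (s c S C : ℝ → ℝ) : ℝ → ℝ := fun z => (-1) * (brM0 a b w s c S C z * brR2 a b w s c S C z) + brM2 a b w s c S C z * brR0 a b w s c S C z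

private noncomputable def brG1_2 (a b w : ℝ) (s c S C : ℝ → ℝ) : ℝ → ℝ := fun z => (-1) * (brM0 a b w s c S C z * brR3 a b w s c S C z) + (-1) * (brM1 a b w s c S C z * brR2 a b w s c S C z) + brM2 a b w s c S C z * brR1 a b w s c S C z + brM3 a b w s c S C z * brR0 a b w s c S C z

private noncomputable def brG1_3 (a b w : ℝ) (s c S C : ℝ → ℝ) : ℝ → ℝ := fun z => (-1) * (brM0 a b w s c S C z * brR4 a b w s c S C z) + (-2) * (brM1 a b w s c S C z * brR3 a b w s c S C z) + 2 * (brM3 a b w s c S C z * brR1 a b w s c S C z) + brM4 a b w s c S C z * brR0 a b w s c S C z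

private noncomputable def brG2_0 (a b w : ℝ) (s c S C : ℝ → ℝ) : ℝ → ℝ := fun z => (-2) * (brG1_0 a b w s c S C z * brR1 a b w s c S C z) + brG1_1 a b w s c S C z * brR0 a b w s c S C z

private noncomputable def brG2_1 (a b w : ℝ) (s c S C : ℝ → ℝ) : ℝ → ℝ := fun z => (-2) * (brG1_0 a b w s c S C z * brR2 a b w s c S C z) + (-1) * (brG1_1 a b w s c S C z * brR1 a b w s c S C z) + brG1_2 a b w s c S C z * brR0 a b w s c S C z

private noncomputable def brG2_2 (a b w : ℝ) (s c S C : ℝ → ℝ) : ℝ → ℝ := fun z => (-2) * (brG1_0 a b w s c S C z * brR3 a b w s c S C z) + (-3) * (brG1_1 a b w s c S C z * brR2 a b w s c S C z) + brG1_3 a b w s c S C z * brR0 a b w s c S C z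

private noncomputable def brG3_0 (a b w : ℝ) (s c S C : ℝ → ℝ) : ℝ → ℝ := fun z => (-3) * (brG2_0 a b w s c S C z * brR1 a b w s c S C z) + brG2_1 a b w s c S C z * brR0 a b w s c S C z

private noncomputable def brG3_1 (a b w : ℝ) (s c S C : ℝ → ℝ) : ℝ → ℝ := fun z => (-3) * (brG2_0 a b w s c S C z * brR2 a b w s c S C z) + (-2) * (brG2_1 a b w s c S C z * brR1 a b w s c S C z) + brG2_2 a b w s c S C z * brR0 a b w s c S C z

private noncomputable def brG4_0 (a b w : ℝ) (s c S C : ℝ → ℝ) : ℝ → ℝ := fun z => (-4) * (brG3_0 a b w s c S C z * brR1 a b w s c S C z) + brG3_1 a b w s c S C z * brR0 a b w s c S C z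

private noncomputable def brF0 (a b w : ℝ) (s c S C : ℝ → ℝ) : ℝ → ℝ := fun z => brM0 a b w s c S C z / (brR0 a b w s c S C z)

private noncomputable def brF1 (a b w : ℝ) (s c S C : ℝ → ℝ) : ℝ → ℝ := fun z => brG1_0 a b w s c S C z / (brR0 a b w s c S C z ^ 2)

private noncomputable def brF2 (a b w : ℝ) (s c S C : ℝ → ℝ) : ℝ → ℝ := fun z => brG2_0 a b w s c S C z / (brR0 a b w s c S C z ^ 3)

private noncomputable def brF3 (a b w : ℝ) (s c S C : ℝ → ℝ) : ℝ → ℝ := fun z => brG3_0 a b w s c S C z / (brR0 a b w s c S C z ^ 4)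

private noncomputable def brF4 (a b w : ℝ) (s c S C : ℝ → ℝ) : ℝ → ℝ := fun z => brG4_0 a b w s c S C z / (brR0 a b w s c S C z ^ 5)


private lemma hd_brM0 (a b w : ℝ) (s c S C : ℝ → ℝ) (x : ℝ) (hs : HasDerivAt s (a * c x) x) (hc : HasDerivAt c (-(a * s x)) x)
    (hS : HasDerivAt S (b * C x) x) (hC : HasDerivAt C (b * S x) x) :
    HasDerivAt (brM0 a b w s c S C) (brM1 a b w s c S C x) x := by
  have H := (((hs.mul hS).const_mul ((-2) * w * a * b ^ 2)).add ((hc.mul hC).const_mul (2 * w * a ^ 2 * b)))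
  have H2 : HasDerivAt (brM0 a b w s c S C) _ x := H
  convert H2 using 1
  simp only [brM1]
  ring


private lemma hd_brM1 (a b w : ℝ) (s c S C : ℝ → ℝ) (x : ℝ) (hs : HasDerivAt s (a * c x) x) (hc : HasDerivAt c (-(a * s x)) x)
    (hS : HasDerivAt S (b * C x) x) (hC : HasDerivAt C (b * S x) x) :
    HasDerivAt (brM1 a b w s c S C) (brM2 a b w s c S C x) x := by
  have H := (((hs.mul hC).const_mul ((-2) * w * a * b ^ 3)).add ((hs.mul hC).const_mul ((-2) * w * a ^ 3 * b)))
  have H2 : HasDerivAt (brM1 a b w s c S C) _ x := H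
  convert H2 using 1
  simp only [brM2]
  ring


private lemma hd_brM2 (a b w : ℝ) (s c S C : ℝ → ℝ) (x : ℝ) (hs : HasDerivAt s (a * c x) x) (hc : HasDerivAt c (-(a * s x)) x)
    (hS : HasDerivAt S (b * C x) x) (hC : HasDerivAt C (b * S x) x) :
    HasDerivAt (brM2 a b w s c S C) (brM3 a b w s c S C x) x := by
  have H := (((((hs.mul hS).const_mul ((-2) * w * a * b ^ 4)).add ((hc.mul hC).const_mul ((-2) * w * a ^ 2 * b ^ 3))).add ((hs.mul hS).const_mul ((-2) * w * a ^ 3 * b ^ 2))).add ((hc.mul hC).const_mul ((-2) * w * a ^ 4 * b)))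
  have H2 : HasDerivAt (brM2 a b w s c S C) _ x := H
  convert H2 using 1
  simp only [brM3]
  ring


private lemma hd_brM3 (a b w : ℝ) (s c S C : ℝ → ℝ) (x : ℝ) (hs : HasDerivAt s (a * c x) x) (hc : HasDerivAt c (-(a * s x)) x)
    (hS : HasDerivAt S (b * C x) x) (hC : HasDerivAt C (b * S x) x) :
    HasDerivAt (brM3 a b w s c S C) (brM4 a b w s c S C x) x := by
  have H := (((((hs.mul hC).const_mul ((-2) * w * a * b ^ 5)).add ((hc.mul hS).const_mul ((-4) * w * a ^ 2 * b ^ 4))).add ((hc.mul hS).const_mul ((-4) * w * a ^ 4 * b ^ 2))).add ((hs.mul hC).const_mul (2 * w * a ^ 5 * b)))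
  have H2 : HasDerivAt (brM3 a b w s c S C) _ x := H
  convert H2 using 1
  simp only [brM4]
  ring


private lemma hd_brR0 (a b w : ℝ) (s c S C : ℝ → ℝ) (x : ℝ) (hs : HasDerivAt s (a * c x) x) (hc : HasDerivAt c (-(a * s x)) x)
    (hS : HasDerivAt S (b * C x) x) (hC : HasDerivAt C (b * S x) x) :
    HasDerivAt (brR0 a b w s c S C) (brR1 a b w s c S C x) x := by
  have H := (((hs.pow 2).const_mul (b ^ 2)).add ((hC.pow 2).const_mul (a ^ 2)))
  have H2 : HasDerivAt (brR0 a b w s c S C) _ x := H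
  convert H2 using 1
  simp only [brR1]
  ring


private lemma hd_brR1 (a b w : ℝ) (s c S C : ℝ → ℝ) (x : ℝ) (hs : HasDerivAt s (a * c x) x) (hc : HasDerivAt c (-(a * s x)) x)
    (hS : HasDerivAt S (b * C x) x) (hC : HasDerivAt C (b * S x) x) :
    HasDerivAt (brR1 a b w s c S C) (brR2 a b w s c S C x) x := by
  have H := (((hs.mul hc).const_mul (2 * a * b ^ 2)).add ((hS.mul hC).const_mul (2 * a ^ 2 * b)))
  have H2 : HasDerivAt (brR1 a b w s c S C) _ x := H
  convert H2 using 1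
  simp only [brR2]
  ring


private lemma hd_brR2 (a b w : ℝ) (s c S C : ℝ → ℝ) (x : ℝ) (hs : HasDerivAt s (a * c x) x) (hc : HasDerivAt c (-(a * s x)) x)
    (hS : HasDerivAt S (b * C x) x) (hC : HasDerivAt C (b * S x) x) :
    HasDerivAt (brR2 a b w s c S C) (brR3 a b w s c S C x) x := by
  have H := (((((hC.pow 2).const_mul (2 * a ^ 2 * b ^ 2)).add ((hS.pow 2).const_mul (2 * a ^ 2 * b ^ 2))).add ((hc.pow 2).const_mul (2 * a ^ 2 * b ^ 2))).add ((hs.pow 2).const_mul ((-2) * a ^ 2 * b ^ 2)))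
  have H2 : HasDerivAt (brR2 a b w s c S C) _ x := H
  convert H2 using 1
  simp only [brR3]
  ring


private lemma hd_brR3 (a b w : ℝ) (s c S C : ℝ → ℝ) (x : ℝ) (hs : HasDerivAt s (a * c x) x) (hc : HasDerivAt c (-(a * s x)) x)
    (hS : HasDerivAt S (b * C x) x) (hC : HasDerivAt C (b * S x) x) :
    HasDerivAt (brR3 a b w s c S C) (brR4 a b w s c S C x) x := by
  have H := (((hS.mul hC).const_mul (8 * a ^ 2 * b ^ 3)).add ((hs.mul hc).const_mul ((-8) * a ^ 3 * b ^ 2)))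
  have H2 : HasDerivAt (brR3 a b w s c S C) _ x := H
  convert H2 using 1
  simp only [brR4]
  ring


private lemma hd_brG1_0 (a b w : ℝ) (s c S C : ℝ → ℝ) (x : ℝ) (hs : HasDerivAt s (a * c x) x) (hc : HasDerivAt c (-(a * s x)) x)
    (hS : HasDerivAt S (b * C x) x) (hC : HasDerivAt C (b * S x) x) :
    HasDerivAt (brG1_0 a b w s c S C) (brG1_1 a b w s c S C x) x := by
  have H := ((((hd_brM0 a b w s c S C x hs hc hS hC).mul (hd_brR1 a b w s c S C x hs hc hS hC)).const_mul ((-1))).add ((hd_brM1 a b w s c S C x hs hc hS hC).mul (hd_brR0 a b w s c S C x hs hc hS hC)))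
  have H2 : HasDerivAt (brG1_0 a b w s c S C) _ x := H
  convert H2 using 1
  simp only [brG1_1]
  ring


private lemma hd_brG1_1 (a b w : ℝ) (s c S C : ℝ → ℝ) (x : ℝ) (hs : HasDerivAt s (a * c x) x) (hc : HasDerivAt c (-(a * s x)) x)
    (hS : HasDerivAt S (b * C x) x) (hC : HasDerivAt C (b * S x) x) :
    HasDerivAt (brG1_1 a b w s c S C) (brG1_2 a b w s c S C x) x := by
  have H := ((((hd_brM0 a b w s c S C x hs hc hS hC).mul (hd_brR2 a b w s c S C x hs hc hS hC)).const_mul ((-1))).add ((hd_brM2 a b w s c S C x hs hc hS hC).mul (hd_brR0 a b w s c S C x hs hc hS hC)))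
  have H2 : HasDerivAt (brG1_1 a b w s c S C) _ x := H
  convert H2 using 1
  simp only [brG1_2]
  ring


private lemma hd_brG1_2 (a b w : ℝ) (s c S C : ℝ → ℝ) (x : ℝ) (hs : HasDerivAt s (a * c x) x) (hc : HasDerivAt c (-(a * s x)) x)
    (hS : HasDerivAt S (b * C x) x) (hC : HasDerivAt C (b * S x) x) :
    HasDerivAt (brG1_2 a b w s c S C) (brG1_3 a b w s c S C x) x := by
  have H := ((((((hd_brM0 a b w s c S C x hs hc hS hC).mul (hd_brR3 a b w s c S C x hs hc hS hC)).const_mul ((-1))).add (((hd_brM1 a b w s c S C x hs hc hS hC).mul (hd_brR2 a b w s c S C x hs hc hS hC)).const_mul ((-1)))).add ((hd_brM2 a b w s c S C x hs hc hS hC).mul (hd_brR1 a b w s c S C x hs hc hS hC))).add ((hd_brM3 a b w s c S C x hs hc hS hC).mul (hd_brR0 a b w s c S C x hs hc hS hC)))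
  have H2 : HasDerivAt (brG1_2 a b w s c S C) _ x := H
  convert H2 using 1
  simp only [brG1_3]
  ring


private lemma hd_brG2_0 (a b w : ℝ) (s c S C : ℝ → ℝ) (x : ℝ) (hs : HasDerivAt s (a * c x) x) (hc : HasDerivAt c (-(a * s x)) x)
    (hS : HasDerivAt S (b * C x) x) (hC : HasDerivAt C (b * S x) x) :
    HasDerivAt (brG2_0 a b w s c S C) (brG2_1 a b w s c S C x) x := by
  have H := ((((hd_brG1_0 a b w s c S C x hs hc hS hC).mul (hd_brR1 a b w s c S C x hs hc hS hC)).const_mul ((-2))).add ((hd_brG1_1 a b w s c S C x hs hc hS hC).mul (hd_brR0 a b w s c S C x hs hc hS hC)))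
  have H2 : HasDerivAt (brG2_0 a b w s c S C) _ x := H
  convert H2 using 1
  simp only [brG2_1]
  ring


private lemma hd_brG2_1 (a b w : ℝ) (s c S C : ℝ → ℝ) (x : ℝ) (hs : HasDerivAt s (a * c x) x) (hc : HasDerivAt c (-(a * s x)) x)
    (hS : HasDerivAt S (b * C x) x) (hC : HasDerivAt C (b * S x) x) :
    HasDerivAt (brG2_1 a b w s c S C) (brG2_2 a b w s c S C x) x := by
  have H := (((((hd_brG1_0 a b w s c S C x hs hc hS hC).mul (hd_brR2 a b w s c S C x hs hc hS hC)).const_mul ((-2))).add (((hd_brG1_1 a b w s c S C x hs hc hS hC).mul (hd_brR1 a b w s c S C x hs hc hS hC)).const_mul ((-1)))).add ((hd_brG1_2 a b w s c S C x hs hc hS hC).mul (hd_brR0 a b w s c S C x hs hc hS hC)))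
  have H2 : HasDerivAt (brG2_1 a b w s c S C) _ x := H
  convert H2 using 1
  simp only [brG2_2]
  ring


private lemma hd_brG3_0 (a b w : ℝ) (s c S C : ℝ → ℝ) (x : ℝ) (hs : HasDerivAt s (a * c x) x) (hc : HasDerivAt c (-(a * s x)) x)
    (hS : HasDerivAt S (b * C x) x) (hC : HasDerivAt C (b * S x) x) :
    HasDerivAt (brG3_0 a b w s c S C) (brG3_1 a b w s c S C x) x := by
  have H := ((((hd_brG2_0 a b w s c S C x hs hc hS hC).mul (hd_brR1 a b w s c S C x hs hc hS hC)).const_mul ((-3))).add ((hd_brG2_1 a b w s c S C x hs hc hS hC).mul (hd_brR0 a b w s c S C x hs hc hS hC)))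
  have H2 : HasDerivAt (brG3_0 a b w s c S C) _ x := H
  convert H2 using 1
  simp only [brG3_1]
  ring


private lemma hd_brF0 (a b w : ℝ) (s c S C : ℝ → ℝ) (x : ℝ) (hs : HasDerivAt s (a * c x) x) (hc : HasDerivAt c (-(a * s x)) x)
    (hS : HasDerivAt S (b * C x) x) (hC : HasDerivAt C (b * S x) x)
    (hQ0 : brR0 a b w s c S C x ≠ 0) :
    HasDerivAt (brF0 a b w s c S C) (brF1 a b w s c S C x) x := by
  have H := (hd_brM0 a b w s c S C x hs hc hS hC).div (hd_brR0 a b w s c S C x hs hc hS hC) hQ0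
  have H2 : HasDerivAt (brF0 a b w s c S C) _ x := H
  convert H2 using 1
  simp only [brF1, brG1_0]
  field_simp
  ring


private lemma hd_brF1 (a b w : ℝ) (s c S C : ℝ → ℝ) (x : ℝ) (hs : HasDerivAt s (a * c x) x) (hc : HasDerivAt c (-(a * s x)) x)
    (hS : HasDerivAt S (b * C x) x) (hC : HasDerivAt C (b * S x) x)
    (hQ0 : brR0 a b w s c S C x ≠ 0) :
    HasDerivAt (brF1 a b w s c S C) (brF2 a b w s c S C x) x := by
  have H := (hd_brG1_0 a b w s c S C x hs hc hS hC).div ((hd_brR0 a b w s c S C x hs hc hS hC).pow 2) (pow_ne_zero 2 hQ0)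
  have H2 : HasDerivAt (brF1 a b w s c S C) _ x := H
  convert H2 using 1
  simp only [brF2, brG2_0, Pi.pow_apply]
  field_simp
  ring


private lemma hd_brF2 (a b w : ℝ) (s c S C : ℝ → ℝ) (x : ℝ) (hs : HasDerivAt s (a * c x) x) (hc : HasDerivAt c (-(a * s x)) x)
    (hS : HasDerivAt S (b * C x) x) (hC : HasDerivAt C (b * S x) x)
    (hQ0 : brR0 a b w s c S C x ≠ 0) :
    HasDerivAt (brF2 a b w s c S C) (brF3 a b w s c S C x) x := by
  have H := (hd_brG2_0 a b w s c S C x hs hc hS hC).div ((hd_brR0 a b w s c S C x hs hc hS hC).pow 3) (pow_ne_zero 3 hQ0)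
  have H2 : HasDerivAt (brF2 a b w s c S C) _ x := H
  convert H2 using 1
  simp only [brF3, brG3_0, Pi.pow_apply]
  field_simp
  ring


private lemma hd_brF3 (a b w : ℝ) (s c S C : ℝ → ℝ) (x : ℝ) (hs : HasDerivAt s (a * c x) x) (hc : HasDerivAt c (-(a * s x)) x)
    (hS : HasDerivAt S (b * C x) x) (hC : HasDerivAt C (b * S x) x)
    (hQ0 : brR0 a b w s c S C x ≠ 0) :
    HasDerivAt (brF3 a b w s c S C) (brF4 a b w s c S C x) x := by
  have H := (hd_brG3_0 a b w s c S C x hs hc hS hC).div ((hd_brR0 a b w s c S C x hs hc hS hC).pow 4) (pow_ne_zero 4 hQ0)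
  have H2 : HasDerivAt (brF3 a b w s c S C) _ x := H
  convert H2 using 1
  simp only [brF4, brG4_0, Pi.pow_apply]
  field_simp
  ring


private lemma brMain (a b w : ℝ) (s c S C : ℝ → ℝ) (B : ℝ → ℝ)
    (hs : ∀ x, HasDerivAt s (a * c x) x) (hc : ∀ x, HasDerivAt c (-(a * s x)) x)
    (hS : ∀ x, HasDerivAt S (b * C x) x) (hC : ∀ x, HasDerivAt C (b * S x) x)
    (hQ : ∀ x, brR0 a b w s c S C x ≠ 0)
    (hsc : ∀ x, s x ^ 2 + c x ^ 2 = 1) (hch : ∀ x, C x ^ 2 - S x ^ 2 = 1)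
    (hw : w ^ 2 = 2) (hB : B = brF0 a b w s c S C) (x : ℝ) :
    iteratedDeriv 4 B x - 2 * (b ^ 2 - a ^ 2) * (deriv (deriv B) x + B x ^ 3)
      + (a ^ 2 + b ^ 2) ^ 2 * B x + 5 * B x * (deriv B x) ^ 2
      + 5 * B x ^ 2 * deriv (deriv B) x + 3 / 2 * B x ^ 5 = 0 := by
  have eD1 : deriv (brF0 a b w s c S C) = brF1 a b w s c S C :=
    funext fun z => (hd_brF0 a b w s c S C z (hs z) (hc z) (hS z) (hC z) (hQ z)).deriv
  have eD2 : deriv (brF1 a b w s c S C) = brF2 a b w s c S C :=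
    funext fun z => (hd_brF1 a b w s c S C z (hs z) (hc z) (hS z) (hC z) (hQ z)).deriv
  have eD3 : deriv (brF2 a b w s c S C) = brF3 a b w s c S C :=
    funext fun z => (hd_brF2 a b w s c S C z (hs z) (hc z) (hS z) (hC z) (hQ z)).deriv
  have eD4 : deriv (brF3 a b w s c S C) = brF4 a b w s c S C :=
    funext fun z => (hd_brF3 a b w s c S C z (hs z) (hc z) (hS z) (hC z) (hQ z)).deriv
  have e4 : iteratedDeriv 4 B = brF4 a b w s c S C := by
    rw [show (4 : ℕ) = 0 + 1 + 1 + 1 + 1 from rfl]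
    simp only [iteratedDeriv_succ, iteratedDeriv_zero]
    rw [hB, eD1, eD2, eD3, eD4]
  have e2 : deriv (deriv B) = brF2 a b w s c S C := by rw [hB, eD1, eD2]
  have e1 : deriv B = brF1 a b w s c S C := by rw [hB, eD1]
  rw [e4, e2, e1, hB]
  have hQ0 : brR0 a b w s c S C x ≠ 0 := hQ x
  have key : brG4_0 a b w s c S C x - 2 * (b ^ 2 - a ^ 2) * (brG2_0 a b w s c S C x * brR0 a b w s c S C x ^ 2 + brM0 a b w s c S C x ^ 3 * brR0 a b w s c S C x ^ 2) + (a ^ 2 + b ^ 2) ^ 2 * brM0 a b w s c S C x * brR0 a b w s c S C x ^ 4 + 5 * brM0 a b w s c S C x * brG1_0 a b w s c S C x ^ 2 + 5 * brM0 a b w s c S C x ^ 2 * brG2_0 a b w s c S C x + (3/2) * brM0 a b w s c S C x ^ 5 = 0 := by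
    have hscx := hsc x
    have hchx := hch x
    simp only [brG1_0, brG1_1, brG1_2, brG1_3, brG2_0, brG2_1, brG2_2, brG3_0, brG3_1, brG4_0, brM0, brM1, brM2, brM3, brM4, brR0, brR1, brR2, brR3, brR4]
    linear_combination ((-16) * w * a ^ 3 * b ^ 12 * (s x ^ 7 * S x) + 96 * w * a ^ 4 * b ^ 11 * (s x ^ 6 * c x * C x) + (-240) * w * a ^ 5 * b ^ 10 * (s x ^ 5 * S x) + 1456 * w * a ^ 5 * b ^ 10 * (s x ^ 5 * S x * C x ^ 2) + 480 * w * a ^ 5 * b ^ 10 * (s x ^ 5 * S x ^ 3) + (-240) * w * a ^ 5 * b ^ 10 * (s x ^ 5 * c x ^ 2 * S x) + (-64) * w * a ^ 5 * b ^ 10 * (s x ^ 7 * S x) + (-552) * w ^ 3 * a ^ 5 * b ^ 10 * (s x ^ 5 * S x * C x ^ 2) + (-400) * w ^ 3 * a ^ 5 * b ^ 10 * (s x ^ 5 * S x ^ 3) + 240 * w * a ^ 6 * b ^ 9 * (s x ^ 4 * c x * C x) + (-640) * w * a ^ 6 * b ^ 9 * (s x ^ 4 * c x * C x ^ 3) +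 (-2400) * w * a ^ 6 * b ^ 9 * (s x ^ 4 * c x * S x ^ 2 * C x) + 240 * w * a ^ 6 * b ^ 9 * (s x ^ 4 * c x ^ 3 * C x) + 144 * w * a ^ 6 * b ^ 9 * (s x ^ 6 * c x * C x) + 264 * w ^ 3 * a ^ 6 * b ^ 9 * (s x ^ 4 * c x * C x ^ 3) + 1200 * w ^ 3 * a ^ 6 * b ^ 9 * (s x ^ 4 * c x * S x ^ 2 * C x) + 2400 * w * a ^ 7 * b ^ 8 * (s x ^ 3 * S x * C x ^ 2) + 80 * w * a ^ 7 * b ^ 8 * (s x ^ 3 * S x * C x ^ 4) + (-4800) * w * a ^ 7 * b ^ 8 * (s x ^ 3 * S x ^ 3 * C x ^ 2) + 2400 * w * a ^ 7 * b ^ 8 * (s x ^ 3 * c x ^ 2 * S x * C x ^ 2) + (-656) * w * a ^ 7 * b ^ 8 * (s x ^ 5 * S x * C x ^ 2) + (-1200) * w ^ 3 * a ^ 7 * b ^ 8 * (s x ^ 3 * S x * C x ^ 2) + 96 * w ^ 3 * a ^ 7 * b ^ 8 * (s x ^ 3 * S x * C x ^ 4) + 3200 * w ^ 3 * a ^ 7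 * b ^ 8 * (s x ^ 3 * S x ^ 3 * C x ^ 2) + (-1200) * w ^ 3 * a ^ 7 * b ^ 8 * (s x ^ 3 * c x ^ 2 * S x * C x ^ 2) + 312 * w ^ 3 * a ^ 7 * b ^ 8 * (s x ^ 5 * S x * C x ^ 2) + (-480) * w ^ 5 * a ^ 7 * b ^ 8 * (s x ^ 3 * S x ^ 3 * C x ^ 2) + (-480) * w * a ^ 8 * b ^ 7 * (s x ^ 2 * c x * C x ^ 3) + (-608) * w * a ^ 8 * b ^ 7 * (s x ^ 2 * c x * C x ^ 5) + 4800 * w * a ^ 8 * b ^ 7 * (s x ^ 2 * c x * S x ^ 2 * C x ^ 3) + (-480) * w * a ^ 8 * b ^ 7 * (s x ^ 2 * c x ^ 3 * C x ^ 3) + 320 * w * a ^ 8 * b ^ 7 * (s x ^ 4 * c x * C x ^ 3) + 400 * w ^ 3 * a ^ 8 * b ^ 7 * (s x ^ 2 * c x * C x ^ 3) + 128 * w ^ 3 * a ^ 8 * b ^ 7 * (s x ^ 2 * c x * C x ^ 5) + (-3200) * w ^ 3 * a ^ 8 * b ^ 7 * (s x ^ 2 * c x * S x ^ 2 * C x ^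 3) + 400 * w ^ 3 * a ^ 8 * b ^ 7 * (s x ^ 2 * c x ^ 3 * C x ^ 3) + (-24) * w ^ 3 * a ^ 8 * b ^ 7 * (s x ^ 4 * c x * C x ^ 3) + 480 * w ^ 5 * a ^ 8 * b ^ 7 * (s x ^ 2 * c x * S x ^ 2 * C x ^ 3) + (-1200) * w * a ^ 9 * b ^ 6 * (s x * S x * C x ^ 4) + (-1392) * w * a ^ 9 * b ^ 6 * (s x * S x * C x ^ 6) + 2400 * w * a ^ 9 * b ^ 6 * (s x * S x ^ 3 * C x ^ 4) + (-1200) * w * a ^ 9 * b ^ 6 * (s x * c x ^ 2 * S x * C x ^ 4) + 2720 * w * a ^ 9 * b ^ 6 * (s x ^ 3 * S x * C x ^ 4) + 1200 * w ^ 3 * a ^ 9 * b ^ 6 * (s x * S x * C x ^ 4) + 648 * w ^ 3 * a ^ 9 * b ^ 6 * (s x * S x * C x ^ 6) + (-1200) * w ^ 3 * a ^ 9 * b ^ 6 * (s x * S x ^ 3 * C x ^ 4) + 1200 * w ^ 3 * a ^ 9 * b ^ 6 * (s x * c x ^ 2 * S x * C x ^ 4) + (-1776) * w ^ 3 * a ^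 9 * b ^ 6 * (s x ^ 3 * S x * C x ^ 4) + (-240) * w ^ 5 * a ^ 9 * b ^ 6 * (s x * S x * C x ^ 4) + (-240) * w ^ 5 * a ^ 9 * b ^ 6 * (s x * c x ^ 2 * S x * C x ^ 4) + 240 * w ^ 5 * a ^ 9 * b ^ 6 * (s x ^ 3 * S x * C x ^ 4) + 48 * w * a ^ 10 * b ^ 5 * (c x * C x ^ 5) + 128 * w * a ^ 10 * b ^ 5 * (c x * C x ^ 7) + (-480) * w * a ^ 10 * b ^ 5 * (c x * S x ^ 2 * C x ^ 5) + 48 * w * a ^ 10 * b ^ 5 * (c x ^ 3 * C x ^ 5) + (-560) * w * a ^ 10 * b ^ 5 * (s x ^ 2 * c x * C x ^ 5) + (-80) * w ^ 3 * a ^ 10 * b ^ 5 * (c x * C x ^ 5) + (-136) * w ^ 3 * a ^ 10 * b ^ 5 * (c x * C x ^ 7) + 400 * w ^ 3 * a ^ 10 * b ^ 5 * (c x * S x ^ 2 * C x ^ 5) + (-80) * w ^ 3 * a ^ 10 * b ^ 5 * (c x ^ 3 * C x ^ 5) + 432 * w ^ 3 * a ^ 10 * b ^ 5 * (s x ^ 2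 * c x * C x ^ 5) + 48 * w ^ 5 * a ^ 10 * b ^ 5 * (c x * C x ^ 5) + 48 * w ^ 5 * a ^ 10 * b ^ 5 * (c x ^ 3 * C x ^ 5) + (-48) * w ^ 5 * a ^ 10 * b ^ 5 * (s x ^ 2 * c x * C x ^ 5) + (-528) * w * a ^ 11 * b ^ 4 * (s x * S x * C x ^ 6) + 312 * w ^ 3 * a ^ 11 * b ^ 4 * (s x * S x * C x ^ 6) + 32 * w * a ^ 12 * b ^ 3 * (c x * C x ^ 7) + (-24) * w ^ 3 * a ^ 12 * b ^ 3 * (c x * C x ^ 7)) * hscx + (-(32 * w * a ^ 3 * b ^ 12 * (s x ^ 7 * S x) + (-24) * w ^ 3 * a ^ 3 * b ^ 12 * (s x ^ 7 * S x) + (-528) * w * a ^ 4 * b ^ 11 * (s x ^ 6 * c x * C x) + 312 * w ^ 3 * a ^ 4 * b ^ 11 * (s x ^ 6 * c x * C x) + 528 * w * a ^ 5 * b ^ 10 * (s x ^ 5 * S x) + (-560) * w * a ^ 5 * b ^ 10 * (s x ^ 5 * S x * C x ^ 2) + (-48) * w * a ^ 5 * b ^ 10 * (s x ^ 5 * S x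 ^ 3) + (-352) * w * a ^ 5 * b ^ 10 * (s x ^ 7 * S x) + (-480) * w ^ 3 * a ^ 5 * b ^ 10 * (s x ^ 5 * S x) + 432 * w ^ 3 * a ^ 5 * b ^ 10 * (s x ^ 5 * S x * C x ^ 2) + 80 * w ^ 3 * a ^ 5 * b ^ 10 * (s x ^ 5 * S x ^ 3) + 264 * w ^ 3 * a ^ 5 * b ^ 10 * (s x ^ 7 * S x) + 48 * w ^ 5 * a ^ 5 * b ^ 10 * (s x ^ 5 * S x) + (-48) * w ^ 5 * a ^ 5 * b ^ 10 * (s x ^ 5 * S x * C x ^ 2) + (-48) * w ^ 5 * a ^ 5 * b ^ 10 * (s x ^ 5 * S x ^ 3) + (-3600) * w * a ^ 6 * b ^ 9 * (s x ^ 4 * c x * C x) + 2720 * w * a ^ 6 * b ^ 9 * (s x ^ 4 * c x * C x ^ 3) + 1200 * w * a ^ 6 * b ^ 9 * (s x ^ 4 * c x * S x ^ 2 * C x) + 1008 * w * a ^ 6 * b ^ 9 * (s x ^ 6 * c x * C x) + 2400 * w ^ 3 * a ^ 6 * b ^ 9 * (s x ^ 4 * c x * C x) + (-1776) * w ^ 3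 * a ^ 6 * b ^ 9 * (s x ^ 4 * c x * C x ^ 3) + (-1200) * w ^ 3 * a ^ 6 * b ^ 9 * (s x ^ 4 * c x * S x ^ 2 * C x) + (-552) * w ^ 3 * a ^ 6 * b ^ 9 * (s x ^ 6 * c x * C x) + (-240) * w ^ 5 * a ^ 6 * b ^ 9 * (s x ^ 4 * c x * C x) + 240 * w ^ 5 * a ^ 6 * b ^ 9 * (s x ^ 4 * c x * C x ^ 3) + 240 * w ^ 5 * a ^ 6 * b ^ 9 * (s x ^ 4 * c x * S x ^ 2 * C x) + (-5280) * w * a ^ 7 * b ^ 8 * (s x ^ 3 * S x * C x ^ 2) + 320 * w * a ^ 7 * b ^ 8 * (s x ^ 3 * S x * C x ^ 4) + 480 * w * a ^ 7 * b ^ 8 * (s x ^ 3 * S x ^ 3 * C x ^ 2) + 4192 * w * a ^ 7 * b ^ 8 * (s x ^ 5 * S x * C x ^ 2) + 3600 * w ^ 3 * a ^ 7 * b ^ 8 * (s x ^ 3 * S x * C x ^ 2) + (-24) * w ^ 3 * a ^ 7 * b ^ 8 * (s x ^ 3 * S x * C x ^ 4) + (-400) * w ^ 3 * a ^ 7 *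 b ^ 8 * (s x ^ 3 * S x ^ 3 * C x ^ 2) + (-3072) * w ^ 3 * a ^ 7 * b ^ 8 * (s x ^ 5 * S x * C x ^ 2) + (-480) * w ^ 5 * a ^ 7 * b ^ 8 * (s x ^ 3 * S x * C x ^ 2) + 480 * w ^ 5 * a ^ 7 * b ^ 8 * (s x ^ 5 * S x * C x ^ 2) + 7200 * w * a ^ 8 * b ^ 7 * (s x ^ 2 * c x * C x ^ 3) + (-656) * w * a ^ 8 * b ^ 7 * (s x ^ 2 * c x * C x ^ 5) + (-2400) * w * a ^ 8 * b ^ 7 * (s x ^ 2 * c x * S x ^ 2 * C x ^ 3) + (-4720) * w * a ^ 8 * b ^ 7 * (s x ^ 4 * c x * C x ^ 3) + (-4400) * w ^ 3 * a ^ 8 * b ^ 7 * (s x ^ 2 * c x * C x ^ 3) + 312 * w ^ 3 * a ^ 8 * b ^ 7 * (s x ^ 2 * c x * C x ^ 5) + 1200 * w ^ 3 * a ^ 8 * b ^ 7 * (s x ^ 2 * c x * S x ^ 2 * C x ^ 3) + 3296 * w ^ 3 * a ^ 8 * b ^ 7 * (s x ^ 4 * c x * C x ^ 3) + 480 * w ^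 5 * a ^ 8 * b ^ 7 * (s x ^ 2 * c x * C x ^ 3) + (-480) * w ^ 5 * a ^ 8 * b ^ 7 * (s x ^ 4 * c x * C x ^ 3) + 2640 * w * a ^ 9 * b ^ 6 * (s x * S x * C x ^ 4) + 144 * w * a ^ 9 * b ^ 6 * (s x * S x * C x ^ 6) + (-240) * w * a ^ 9 * b ^ 6 * (s x * S x ^ 3 * C x ^ 4) + (-3040) * w * a ^ 9 * b ^ 6 * (s x ^ 3 * S x * C x ^ 4) + (-1200) * w ^ 3 * a ^ 9 * b ^ 6 * (s x * S x * C x ^ 4) + 1464 * w ^ 3 * a ^ 9 * b ^ 6 * (s x ^ 3 * S x * C x ^ 4) + (-720) * w * a ^ 10 * b ^ 5 * (c x * C x ^ 5) + (-64) * w * a ^ 10 * b ^ 5 * (c x * C x ^ 7) + 240 * w * a ^ 10 * b ^ 5 * (c x * S x ^ 2 * C x ^ 5) + 1936 * w * a ^ 10 * b ^ 5 * (s x ^ 2 * c x * C x ^ 5) + 400 * w ^ 3 * a ^ 10 * b ^ 5 * (c x * C x ^ 5) + (-952) * w ^ 3 * a ^ 10 * b ^ 5 * (s x ^ 2 * c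 x * C x ^ 5) + 96 * w * a ^ 11 * b ^ 4 * (s x * S x * C x ^ 6) + (-16) * w * a ^ 12 * b ^ 3 * (c x * C x ^ 7))) * hchx + (24 * w * a ^ 3 * b ^ 12 * (s x ^ 7 * S x) + (-64) * w * a ^ 3 * b ^ 12 * (s x ^ 7 * S x * C x ^ 2) + (-312) * w * a ^ 4 * b ^ 11 * (s x ^ 6 * c x * C x) + 352 * w * a ^ 4 * b ^ 11 * (s x ^ 6 * c x * C x ^ 3) + 384 * w * a ^ 5 * b ^ 10 * (s x ^ 5 * S x) + (-1272) * w * a ^ 5 * b ^ 10 * (s x ^ 5 * S x * C x ^ 2) + 256 * w * a ^ 5 * b ^ 10 * (s x ^ 5 * S x * C x ^ 4) + (-264) * w * a ^ 5 * b ^ 10 * (s x ^ 7 * S x) + 736 * w * a ^ 5 * b ^ 10 * (s x ^ 7 * S x * C x ^ 2) + (-48) * w ^ 3 * a ^ 5 * b ^ 10 * (s x ^ 5 * S x) + 96 * w ^ 3 * a ^ 5 * b ^ 10 * (s x ^ 5 * S x * C x ^ 2) + (-48) * w ^ 3 * a ^ 5 * b ^ 10 * (s x ^ 5 * S x * C x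 ^ 4) + (-1920) * w * a ^ 6 * b ^ 9 * (s x ^ 4 * c x * C x) + 3480 * w * a ^ 6 * b ^ 9 * (s x ^ 4 * c x * C x ^ 3) + (-1216) * w * a ^ 6 * b ^ 9 * (s x ^ 4 * c x * C x ^ 5) + 552 * w * a ^ 6 * b ^ 9 * (s x ^ 6 * c x * C x) + (-736) * w * a ^ 6 * b ^ 9 * (s x ^ 6 * c x * C x ^ 3) + 240 * w ^ 3 * a ^ 6 * b ^ 9 * (s x ^ 4 * c x * C x) + (-480) * w ^ 3 * a ^ 6 * b ^ 9 * (s x ^ 4 * c x * C x ^ 3) + 240 * w ^ 3 * a ^ 6 * b ^ 9 * (s x ^ 4 * c x * C x ^ 5) + (-3840) * w * a ^ 7 * b ^ 8 * (s x ^ 3 * S x * C x ^ 2) + 2760 * w * a ^ 7 * b ^ 8 * (s x ^ 3 * S x * C x ^ 4) + (-64) * w * a ^ 7 * b ^ 8 * (s x ^ 3 * S x * C x ^ 6) + 3624 * w * a ^ 7 * b ^ 8 * (s x ^ 5 * S x * C x ^ 2) + (-2368) * w * a ^ 7 * b ^ 8 * (s x ^ 5 * S x * C x ^ 4) + (-352)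 * w * a ^ 7 * b ^ 8 * (s x ^ 7 * S x * C x ^ 2) + 480 * w ^ 3 * a ^ 7 * b ^ 8 * (s x ^ 3 * S x * C x ^ 2) + (-480) * w ^ 3 * a ^ 7 * b ^ 8 * (s x ^ 3 * S x * C x ^ 4) + (-480) * w ^ 3 * a ^ 7 * b ^ 8 * (s x ^ 5 * S x * C x ^ 2) + 480 * w ^ 3 * a ^ 7 * b ^ 8 * (s x ^ 5 * S x * C x ^ 4) + 3840 * w * a ^ 8 * b ^ 7 * (s x ^ 2 * c x * C x ^ 3) + (-3624) * w * a ^ 8 * b ^ 7 * (s x ^ 2 * c x * C x ^ 5) + 352 * w * a ^ 8 * b ^ 7 * (s x ^ 2 * c x * C x ^ 7) + (-2760) * w * a ^ 8 * b ^ 7 * (s x ^ 4 * c x * C x ^ 3) + 2368 * w * a ^ 8 * b ^ 7 * (s x ^ 4 * c x * C x ^ 5) + 64 * w * a ^ 8 * b ^ 7 * (s x ^ 6 * c x * C x ^ 3) + (-480) * w ^ 3 * a ^ 8 * b ^ 7 * (s x ^ 2 * c x * C x ^ 3) + 480 * w ^ 3 * a ^ 8 * b ^ 7 * (s x ^ 2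 * c x * C x ^ 5) + 480 * w ^ 3 * a ^ 8 * b ^ 7 * (s x ^ 4 * c x * C x ^ 3) + (-480) * w ^ 3 * a ^ 8 * b ^ 7 * (s x ^ 4 * c x * C x ^ 5) + 1920 * w * a ^ 9 * b ^ 6 * (s x * S x * C x ^ 4) + (-552) * w * a ^ 9 * b ^ 6 * (s x * S x * C x ^ 6) + (-3480) * w * a ^ 9 * b ^ 6 * (s x ^ 3 * S x * C x ^ 4) + 736 * w * a ^ 9 * b ^ 6 * (s x ^ 3 * S x * C x ^ 6) + 1216 * w * a ^ 9 * b ^ 6 * (s x ^ 5 * S x * C x ^ 4) + (-240) * w ^ 3 * a ^ 9 * b ^ 6 * (s x * S x * C x ^ 4) + 480 * w ^ 3 * a ^ 9 * b ^ 6 * (s x ^ 3 * S x * C x ^ 4) + (-240) * w ^ 3 * a ^ 9 * b ^ 6 * (s x ^ 5 * S x * C x ^ 4) + (-384) * w * a ^ 10 * b ^ 5 * (c x * C x ^ 5) + 264 * w * a ^ 10 * b ^ 5 * (c x * C x ^ 7) + 1272 * w * a ^ 10 * b ^ 5 * (s x ^ 2 * c x * C x ^ 5) + (-736) * w * a ^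 10 * b ^ 5 * (s x ^ 2 * c x * C x ^ 7) + (-256) * w * a ^ 10 * b ^ 5 * (s x ^ 4 * c x * C x ^ 5) + 48 * w ^ 3 * a ^ 10 * b ^ 5 * (c x * C x ^ 5) + (-96) * w ^ 3 * a ^ 10 * b ^ 5 * (s x ^ 2 * c x * C x ^ 5) + 48 * w ^ 3 * a ^ 10 * b ^ 5 * (s x ^ 4 * c x * C x ^ 5) + 312 * w * a ^ 11 * b ^ 4 * (s x * S x * C x ^ 6) + (-352) * w * a ^ 11 * b ^ 4 * (s x ^ 3 * S x * C x ^ 6) + (-24) * w * a ^ 12 * b ^ 3 * (c x * C x ^ 7) + 64 * w * a ^ 12 * b ^ 3 * (s x ^ 2 * c x * C x ^ 7)) * hw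
  have final : brF4 a b w s c S C x - 2 * (b ^ 2 - a ^ 2) * (brF2 a b w s c S C x + brF0 a b w s c S C x ^ 3)
      + (a ^ 2 + b ^ 2) ^ 2 * brF0 a b w s c S C x + 5 * brF0 a b w s c S C x * (brF1 a b w s c S C x) ^ 2
      + 5 * brF0 a b w s c S C x ^ 2 * brF2 a b w s c S C x + 3 / 2 * brF0 a b w s c S C x ^ 5
      = (brG4_0 a b w s c S C x - 2 * (b ^ 2 - a ^ 2) * (brG2_0 a b w s c S C x * brR0 a b w s c S C x ^ 2 + brM0 a b w s c S C x ^ 3 * brR0 a b w s c S C x ^ 2) + (a ^ 2 + b ^ 2) ^ 2 * brM0 a b w s c S C x * brR0 a b w s c S C x ^ 4 + 5 * brM0 a b w s c S C x * brG1_0 a b w s c S C x ^ 2 + 5 * brM0 a b w s c S C x ^ 2 * brG2_0 a b w s c S C x + (3/2) * brM0 a b w s c S C x ^ 5) / brR0 a b w s c S C x ^ 5 := by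
    simp only [brF0, brF1, brF2, brF4]
    field_simp
  rw [final, key, zero_div]


private lemma brA1 (α β t x : ℝ) : HasDerivAt (fun y : ℝ => α * (y + (α ^ 2 - 3 * β ^ 2) * t + 0)) α x := by
  simpa using (((hasDerivAt_id x).add_const ((α ^ 2 - 3 * β ^ 2) * t)).add_const 0).const_mul α

private lemma brA2 (α β t x : ℝ) : HasDerivAt (fun y : ℝ => β * (y + (3 * α ^ 2 - β ^ 2) * t + 0)) β x := by
  simpa using (((hasDerivAt_id x).add_const ((3 * α ^ 2 - β ^ 2) * t)).add_const 0).const_mul β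

private lemma brsin (α β t x : ℝ) : HasDerivAt (fun y : ℝ => Real.sin (α * (y + (α ^ 2 - 3 * β ^ 2) * t + 0))) (α * Real.cos (α * (x + (α ^ 2 - 3 * β ^ 2) * t + 0))) x := by
  simpa [mul_comm, Function.comp_def] using (Real.hasDerivAt_sin (α * (x + (α ^ 2 - 3 * β ^ 2) * t + 0))).comp x (brA1 α β t x)

private lemma brcos (α β t x : ℝ) : HasDerivAt (fun y : ℝ => Real.cos (α * (y + (α ^ 2 - 3 * β ^ 2) * t + 0))) (-(α * Real.sin (α * (x + (α ^ 2 - 3 * β ^ 2) * t + 0)))) x := by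
  have h := (Real.hasDerivAt_cos (α * (x + (α ^ 2 - 3 * β ^ 2) * t + 0))).comp x (brA1 α β t x)
  exact h.congr_deriv (by ring)

private lemma brsinh (α β t x : ℝ) : HasDerivAt (fun y : ℝ => Real.sinh (β * (y + (3 * α ^ 2 - β ^ 2) * t + 0))) (β * Real.cosh (β * (x + (3 * α ^ 2 - β ^ 2) * t + 0))) x := by
  simpa [mul_comm, Function.comp_def] using (Real.hasDerivAt_sinh (β * (x + (3 * α ^ 2 - β ^ 2) * t + 0))).comp x (brA2 α β t x)

private lemma brcosh (α β t x : ℝ) : HasDerivAt (fun y : ℝ => Real.cosh (β * (y + (3 * α ^ 2 - β ^ 2) * t + 0))) (β * Real.sinh (β * (x + (3 * α ^ 2 - β ^ 2) * t + 0))) x := by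
  simpa [mul_comm, Function.comp_def] using (Real.hasDerivAt_cosh (β * (x + (3 * α ^ 2 - β ^ 2) * t + 0))).comp x (brA2 α β t x)

private lemma brQne (α β t : ℝ) (hα : 0 < α) (x : ℝ) :
    brR0 α β (Real.sqrt 2) (fun y : ℝ => Real.sin (α * (y + (α ^ 2 - 3 * β ^ 2) * t + 0))) (fun y : ℝ => Real.cos (α * (y + (α ^ 2 - 3 * β ^ 2) * t + 0))) (fun y : ℝ => Real.sinh (β * (y + (3 * α ^ 2 - β ^ 2) * t + 0))) (fun y : ℝ => Real.cosh (β * (y + (3 * α ^ 2 - β ^ 2) * t + 0))) x ≠ 0 := by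
  simp only [brR0]
  have h1 : 0 < α ^ 2 * (Real.cosh (β * (x + (3 * α ^ 2 - β ^ 2) * t + 0)) ^ 2) :=
    mul_pos (pow_pos hα 2) (pow_pos (Real.cosh_pos _) 2)
  have h2 : 0 ≤ β ^ 2 * (Real.sin (α * (x + (α ^ 2 - 3 * β ^ 2) * t + 0)) ^ 2) := by positivity
  intro h
  nlinarith [h1, h2]

private lemma brB (α β t : ℝ) (hα : 0 < α) :
    breather α β 0 0 t = brF0 α β (Real.sqrt 2) (fun y : ℝ => Real.sin (α * (y + (α ^ 2 - 3 * β ^ 2) * t + 0))) (fun y : ℝ => Real.cos (α * (y + (α ^ 2 - 3 * β ^ 2) * t + 0))) (fun y : ℝ => Real.sinh (β * (y + (3 * α ^ 2 - β ^ 2) * t + 0))) (fun y : ℝ => Real.cosh (β * (y + (3 * α ^ 2 - β ^ 2) * t + 0))) := by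
  funext z
  have hα' : α ≠ 0 := ne_of_gt hα
  have hC0 : Real.cosh (β * (z + (3 * α ^ 2 - β ^ 2) * t + 0)) ≠ 0 := ne_of_gt (Real.cosh_pos _)
  have hI : HasDerivAt (fun y : ℝ => β / α * Real.sin (α * (y + (α ^ 2 - 3 * β ^ 2) * t + 0)) / Real.cosh (β * (y + (3 * α ^ 2 - β ^ 2) * t + 0))) ((β / α * (α * Real.cos (α * (z + (α ^ 2 - 3 * β ^ 2) * t + 0))) * Real.cosh (β * (z + (3 * α ^ 2 - β ^ 2) * t + 0)) - β / α * Real.sin (α * (z + (α ^ 2 - 3 * β ^ 2) * t + 0)) * (β * Real.sinh (β * (z + (3 * α ^ 2 - β ^ 2) * t + 0)))) / Real.cosh (β * (z + (3 * α ^ 2 - β ^ 2) * t + 0)) ^ 2) z :=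
    ((brsin α β t z).const_mul (β / α)).div (brcosh α β t z) hC0
  have hg := hI.arctan
  have h1u : (1 : ℝ) + (β / α * Real.sin (α * (z + (α ^ 2 - 3 * β ^ 2) * t + 0)) / Real.cosh (β * (z + (3 * α ^ 2 - β ^ 2) * t + 0))) ^ 2 ≠ 0 := by positivity
  have hQ0 := brQne α β t hα z
  simp only [brR0] at hQ0
  simp only [breather, brF0, brM0, brR0]
  rw [show deriv (fun y : ℝ => Real.arctan (β / α * Real.sin (α * (y + (α ^ 2 - 3 * β ^ 2) * t + 0)) / Real.cosh (β * (y + (3 * α ^ 2 - β ^ 2) * t + 0)))) z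
      = 1 / (1 + (β / α * Real.sin (α * (z + (α ^ 2 - 3 * β ^ 2) * t + 0)) / Real.cosh (β * (z + (3 * α ^ 2 - β ^ 2) * t + 0))) ^ 2) * ((β / α * (α * Real.cos (α * (z + (α ^ 2 - 3 * β ^ 2) * t + 0))) * Real.cosh (β * (z + (3 * α ^ 2 - β ^ 2) * t + 0)) - β / α * Real.sin (α * (z + (α ^ 2 - 3 * β ^ 2) * t + 0)) * (β * Real.sinh (β * (z + (3 * α ^ 2 - β ^ 2) * t + 0)))) / Real.cosh (β * (z + (3 * α ^ 2 - β ^ 2) * t + 0)) ^ 2) from hg.deriv]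
  field_simp
  ring

theorem breather_elliptic_equation (α β : ℝ) (hα : 0 < α) (hβ : 0 < β) (t x : ℝ) :
    (iteratedDeriv 4 (breather α β 0 0 t)) x
      - 2 * (β ^ 2 - α ^ 2) *
          (deriv (deriv (breather α β 0 0 t)) x + (breather α β 0 0 t x) ^ 3)
      + (α ^ 2 + β ^ 2) ^ 2 * breather α β 0 0 t x
      + 5 * breather α β 0 0 t x * (deriv (breather α β 0 0 t) x) ^ 2
      + 5 * (breather α β 0 0 t x) ^ 2 * deriv (deriv (breather α β 0 0 t)) x
      + (3 / 2) * (breather α β 0 0 t x) ^ 5 = 0 := by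
  exact brMain α β (Real.sqrt 2) (fun y : ℝ => Real.sin (α * (y + (α ^ 2 - 3 * β ^ 2) * t + 0))) (fun y : ℝ => Real.cos (α * (y + (α ^ 2 - 3 * β ^ 2) * t + 0))) (fun y : ℝ => Real.sinh (β * (y + (3 * α ^ 2 - β ^ 2) * t + 0))) (fun y : ℝ => Real.cosh (β * (y + (3 * α ^ 2 - β ^ 2) * t + 0))) (breather α β 0 0 t)
    (fun z => brsin α β t z) (fun z => brcos α β t z)
    (fun z => brsinh α β t z) (fun z => brcosh α β t z)
    (brQne α β t hα)
    (fun z => Real.sin_sq_add_cos_sq (α * (z + (α ^ 2 - 3 * β ^ 2) * t + 0)))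
    (fun z => Real.cosh_sq_sub_sinh_sq (β * (z + (3 * α ^ 2 - β ^ 2) * t + 0)))
    (Real.sq_sqrt (by norm_num))
    (brB α β t hα) x
end

section
/- In the limit β/α → 0 with β(x+γt) and α(x+δt) fixed arguments, the breather admits the expansion B_{α,β}(t,x) = 2√2 β cos(α(x+δt)) sech(β(x+γt)) + O(β²/α), uniformly in x; more precisely, |B_{α,β}(t,x) − 2√2 β cos(α(x+δt)) sech(β(x+γt))| ≤ C β²/α for a constant C independent of α, β, t, x. -/
set_option maxHeartbeats 1000000 in
theorem breather_wave_packet_expansion :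
    ∃ C : ℝ, 0 < C ∧ ∀ α β t x : ℝ, 0 < α → 0 < β →
      |breather α β 0 0 t x -
        2 * Real.sqrt 2 * β * Real.cos (α * (x + (α ^ 2 - 3 * β ^ 2) * t)) /
          Real.cosh (β * (x + (3 * α ^ 2 - β ^ 2) * t))|
        ≤ C * β ^ 2 / α := by
  refine ⟨6, by norm_num, ?_⟩
  intro α β t x hα hβ
  have hα' : α ≠ 0 := ne_of_gt hα
  set c₁ : ℝ := (α ^ 2 - 3 * β ^ 2) * t with hc₁
  set c₂ : ℝ := (3 * α ^ 2 - β ^ 2) * t with hc₂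
  set X : ℝ := α * (x + c₁) with hXdef
  set Y : ℝ := β * (x + c₂) with hYdef
  have hcY : (0:ℝ) < Real.cosh Y := Real.cosh_pos Y
  have hcY1 : (1:ℝ) ≤ Real.cosh Y := Real.one_le_cosh Y
  -- derivative computation
  have hN : HasDerivAt (fun y : ℝ => β / α * Real.sin (α * (y + c₁)))
      (β / α * (Real.cos X * α)) x := by
    have h := ((((hasDerivAt_id x).add_const c₁).const_mul α).sin).const_mul (β / α)
    simpa [mul_one] using h
  have hD : HasDerivAt (fun y : ℝ => Real.cosh (β * (y + c₂)))
      (Real.sinh Y * β) x := by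
    have h := (((hasDerivAt_id x).add_const c₂).const_mul β).cosh
    simpa [mul_one] using h
  set u : ℝ := β / α * Real.sin X / Real.cosh Y with hu
  set d : ℝ := (β / α * (Real.cos X * α) * Real.cosh Y -
      β / α * Real.sin X * (Real.sinh Y * β)) / Real.cosh Y ^ 2 with hd
  have hq : HasDerivAt (fun y : ℝ =>
      Real.arctan (β / α * Real.sin (α * (y + c₁)) / Real.cosh (β * (y + c₂))))
      (1 / (1 + u ^ 2) * d) x := (hN.div hD (ne_of_gt hcY)).arctan
  have hderiv : deriv (fun y : ℝ =>
      Real.arctan (β / α * Real.sin (α * (y + c₁ + 0)) / Real.cosh (β * (y + c₂ + 0)))) x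
      = 1 / (1 + u ^ 2) * d := by
    simpa [add_zero] using hq.deriv
  have hB : breather α β 0 0 t x = 2 * Real.sqrt 2 * (1 / (1 + u ^ 2) * d) := by
    rw [breather, hderiv]
  rw [hB]
  -- now the estimate
  set cX := Real.cos X
  set sX := Real.sin X
  set S := Real.sinh Y
  set D := Real.cosh Y
  have hP : (1:ℝ) ≤ 1 + u ^ 2 := by nlinarith [sq_nonneg u]
  have hP0 : (0:ℝ) < 1 + u ^ 2 := by linarith
  have hsX : |sX| ≤ 1 := Real.abs_sin_le_one X
  have hcX : |cX| ≤ 1 := Real.abs_cos_le_one X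
  have hS : |S| ≤ D := by
    have := Real.sinh_lt_cosh |Y|
    rw [Real.cosh_abs] at this
    rw [Real.abs_sinh]
    exact this.le
  have hsqrt : Real.sqrt 2 ≤ 1.5 := by
    rw [show (1.5:ℝ) = Real.sqrt (1.5^2) by rw [Real.sqrt_sq]; norm_num]
    exact Real.sqrt_le_sqrt (by norm_num)
  have hsqrt0 : 0 ≤ Real.sqrt 2 := Real.sqrt_nonneg 2
  -- key identity
  have hid : 2 * Real.sqrt 2 * (1 / (1 + u ^ 2) * d) - 2 * Real.sqrt 2 * β * cX / D
      = 2 * Real.sqrt 2 * ((-(β ^ 2 / α) * sX * S / D ^ 2 - β * (cX / D) * u ^ 2)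
        / (1 + u ^ 2)) := by
    rw [hd, hu]
    field_simp
    ring
  rw [hid]
  -- bounds
  have hu_le : |u| ≤ β / α := by
    rw [hu, abs_div, abs_mul, abs_div]
    rw [abs_of_pos hβ, abs_of_pos hα, abs_of_pos hcY]
    calc β / α * |sX| / D ≤ β / α * 1 / 1 := by
          apply div_le_div₀ (by positivity) _ one_pos hcY1
          exact mul_le_mul_of_nonneg_left hsX (by positivity)
      _ = β / α := by ring
  have hT : |(-(β ^ 2 / α) * sX * S / D ^ 2)| ≤ β ^ 2 / α := by
    rw [abs_div, abs_mul, abs_mul, abs_neg, abs_of_pos (by positivity : (0:ℝ) < β ^ 2 / α)]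
    rw [abs_of_pos (by positivity : (0:ℝ) < D ^ 2)]
    calc β ^ 2 / α * |sX| * |S| / D ^ 2 ≤ β ^ 2 / α * 1 * D / D ^ 2 := by
          apply div_le_div₀ (by positivity) _ (by positivity) le_rfl
          have h1 : β ^ 2 / α * |sX| ≤ β ^ 2 / α := by
            nlinarith [abs_nonneg sX, (by positivity : (0:ℝ) ≤ β ^ 2 / α)]
          exact (mul_le_mul h1 hS (abs_nonneg S) (by positivity)).trans_eq (by ring)
      _ ≤ β ^ 2 / α := by
          rw [mul_one, div_le_iff₀ (by positivity : (0:ℝ) < D ^ 2)]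
          nlinarith [mul_nonneg (by positivity : (0:ℝ) ≤ β ^ 2 / α)
            (mul_nonneg hcY.le (sub_nonneg.2 hcY1))]
  have h2 : |β * (cX / D) * u ^ 2| ≤ β / α * β * |u| := by
    rw [abs_mul, abs_mul, abs_of_pos hβ, abs_div, abs_of_pos hcY]
    have h3 : |cX| / D ≤ 1 := by
      rw [div_le_one hcY]; linarith [hcX, hcY1]
    calc β * (|cX| / D) * |u ^ 2| ≤ β * 1 * (β / α * |u|) := by
          apply mul_le_mul _ _ (abs_nonneg _) (by positivity)
          · nlinarith [h3, hβ.le]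
          · have e1 : |u ^ 2| = |u| * |u| := by
              rw [abs_of_nonneg (sq_nonneg u), ← sq_abs, sq]
            rw [e1]
            exact mul_le_mul_of_nonneg_right hu_le (abs_nonneg u)
      _ = β / α * β * |u| := by ring
  have huP : |u| ≤ 1 + u ^ 2 := by nlinarith [sq_nonneg (|u| - 1), sq_abs u]
  -- final bound
  rw [abs_mul, abs_of_nonneg (by positivity : (0:ℝ) ≤ 2 * Real.sqrt 2), abs_div,
    abs_of_pos hP0]
  have hnum : |(-(β ^ 2 / α) * sX * S / D ^ 2 - β * (cX / D) * u ^ 2)|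
      ≤ β ^ 2 / α + β / α * β * |u| := by
    calc |(-(β ^ 2 / α) * sX * S / D ^ 2 - β * (cX / D) * u ^ 2)|
        ≤ |(-(β ^ 2 / α) * sX * S / D ^ 2)| + |β * (cX / D) * u ^ 2| := abs_sub _ _
      _ ≤ β ^ 2 / α + β / α * β * |u| := add_le_add hT h2
  have hfrac : |(-(β ^ 2 / α) * sX * S / D ^ 2 - β * (cX / D) * u ^ 2)| / (1 + u ^ 2)
      ≤ 2 * (β ^ 2 / α) := by
    rw [div_le_iff₀ hP0]
    have hb2 : β / α * β * |u| ≤ β ^ 2 / α * (1 + u ^ 2) := by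
      have : β / α * β * |u| ≤ β / α * β * (1 + u ^ 2) :=
        mul_le_mul_of_nonneg_left huP (by positivity)
      calc β / α * β * |u| ≤ β / α * β * (1 + u ^ 2) := this
        _ = β ^ 2 / α * (1 + u ^ 2) := by ring
    calc |(-(β ^ 2 / α) * sX * S / D ^ 2 - β * (cX / D) * u ^ 2)|
        ≤ β ^ 2 / α + β / α * β * |u| := hnum
      _ ≤ β ^ 2 / α * (1 + u ^ 2) + β ^ 2 / α * (1 + u ^ 2) := by
          refine add_le_add ?_ hb2
          nlinarith [(by positivity : (0:ℝ) < β ^ 2 / α), sq_nonneg u]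
      _ = 2 * (β ^ 2 / α) * (1 + u ^ 2) := by ring
  calc 2 * Real.sqrt 2 * (|(-(β ^ 2 / α) * sX * S / D ^ 2 - β * (cX / D) * u ^ 2)| / (1 + u ^ 2))
      ≤ 2 * Real.sqrt 2 * (2 * (β ^ 2 / α)) :=
        mul_le_mul_of_nonneg_left hfrac (by positivity)
    _ ≤ 6 * β ^ 2 / α := by
        have hpos : (0:ℝ) < β ^ 2 / α := by positivity
        rw [show (6:ℝ) * β ^ 2 / α = 6 * (β ^ 2 / α) from by ring]
        nlinarith [mul_le_mul_of_nonneg_right hsqrt hpos.le]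
end
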